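/- arXiv:2107.13755 — 6 statements merged into one kernel-verified Lean document; each statement's English description precedes it below -/
import Mathlib

section
/- Let E be a finite-dimensional real inner product space and let a > 0. Define h_a : E → ℝ by h_a(t) = max(‖t‖²/2, a/2). Then for every l ∈ E, the Fenchel conjugate sup_{t ∈ E} (⟨t, l⟩ − h_a(t)) equals √a·‖l‖ − a/2 if ‖l‖ ≤ √a, and equals ‖l‖²/2 if ‖l‖ > √a. -/
/-! By Cauchy–Schwarz, `⟪t, l⟫ - h_a(t) ≤ r s - max (r²/2) (a/2)` with `r = ‖t‖`, `s = ‖l‖`, which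
reduces the problem to maximising a function of `r ≥ 0`. On `[0, √a]` it is `r s - a/2`, maximal at
`r = √a`; beyond `√a` it is `r s - r²/2`, maximal at `r = s` when `s > √a`. Both maxima are attained
by multiples of `l`. -/

open scoped RealInnerProductSpace

lemma mul_sub_max_sq_half_le {a r s : ℝ} (ha : 0 ≤ a) (hs : 0 ≤ s) :
    r * s - max (r ^ 2 / 2) (a / 2) ≤
      if s ≤ √a then √a * s - a / 2 else s ^ 2 / 2 := by
  have hsq : √a ^ 2 = a := Real.sq_sqrt ha
  have hmax_left : r ^ 2 / 2 ≤ max (r ^ 2 / 2) (a / 2) := le_max_left _ _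
  split_ifs with hs_le
  · rcases le_or_gt r √a with hr_le | hr_gt
    · have hmax_right : a / 2 ≤ max (r ^ 2 / 2) (a / 2) := le_max_right _ _
      nlinarith [mul_le_mul_of_nonneg_right hr_le hs]
    · nlinarith
  · nlinarith [sq_nonneg (r - s)]

lemma exists_inner_sub_max_sq_half_eq {E : Type*} [NormedAddCommGroup E] [InnerProductSpace ℝ E]
    {a : ℝ} (ha : 0 ≤ a) (l : E) :
    ∃ t : E, ⟪t, l⟫ - max (‖t‖ ^ 2 / 2) (a / 2) =
      if ‖l‖ ≤ √a then √a * ‖l‖ - a / 2 else ‖l‖ ^ 2 / 2 := by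
  split_ifs with hl
  · refine ⟨(√a / ‖l‖) • l, ?_⟩
    rcases eq_or_ne l 0 with rfl | hl0
    · simpa using div_nonneg ha zero_le_two
    have hnl : 0 < ‖l‖ := norm_pos_iff.mpr hl0
    have hnorm : ‖(√a / ‖l‖) • l‖ = √a := by
      rw [norm_smul, Real.norm_eq_abs, abs_of_nonneg (by positivity)]
      field_simp
    rw [real_inner_smul_left, real_inner_self_eq_norm_sq, hnorm, Real.sq_sqrt ha, max_self]
    field_simp
  · refine ⟨l, ?_⟩
    have hl_sq : a ≤ ‖l‖ ^ 2 := by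
      simpa [Real.sq_sqrt ha] using pow_le_pow_left₀ (Real.sqrt_nonneg a) (not_le.mp hl).le 2
    rw [real_inner_self_eq_norm_sq, max_eq_left (by linarith)]
    ring

theorem fenchel_conjugate_max_quadratic_general
    {E : Type*} [NormedAddCommGroup E] [InnerProductSpace ℝ E]
    (a : ℝ) (ha : 0 < a) (l : E) :
    (⨆ t : E, (⟪t, l⟫ - max (‖t‖ ^ 2 / 2) (a / 2))) =
      if ‖l‖ ≤ Real.sqrt a then Real.sqrt a * ‖l‖ - a / 2 else ‖l‖ ^ 2 / 2 := by
  have hle : ∀ t : E, ⟪t, l⟫ - max (‖t‖ ^ 2 / 2) (a / 2) ≤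
      if ‖l‖ ≤ √a then √a * ‖l‖ - a / 2 else ‖l‖ ^ 2 / 2 := fun t =>
    (sub_le_sub_right (real_inner_le_norm t l) _).trans
      (mul_sub_max_sq_half_le ha.le (norm_nonneg l))
  obtain ⟨t₀, ht₀⟩ := exists_inner_sub_max_sq_half_eq ha.le l
  exact le_antisymm (ciSup_le hle) (ht₀ ▸ le_ciSup ⟨_, Set.forall_mem_range.2 hle⟩ t₀)

/-- Fenchel conjugate of `h_a(t) = max (‖t‖²/2) (a/2)`. -/
theorem fenchel_conjugate_max_quadratic
    {E : Type*} [NormedAddCommGroup E] [InnerProductSpace ℝ E]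
    [FiniteDimensional ℝ E] (a : ℝ) (ha : 0 < a) (l : E) :
    (⨆ t : E, (⟪t, l⟫ - max (‖t‖ ^ 2 / 2) (a / 2))) =
      if ‖l‖ ≤ Real.sqrt a then Real.sqrt a * ‖l‖ - a / 2 else ‖l‖ ^ 2 / 2 :=
  fenchel_conjugate_max_quadratic_general a ha l
end

section
/- Let E be a finite-dimensional real inner product space and let a > 0. Define h_a^* : E → ℝ by h_a^*(l) = √a·‖l‖ − a/2 if ‖l‖ ≤ √a, and h_a^*(l) = ‖l‖²/2 if ‖l‖ > √a. Then for every t ∈ E, sup_{l ∈ E} (⟨t, l⟩ − h_a^*(l)) = max(‖t‖²/2, a/2). -/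
/-!
`h_a^*(l) = conjMaxHalfSq a ‖l‖`, where `conjMaxHalfSq a` is the conjugate of the convex scalar
function `r ↦ max (r²/2) (a/2)`, so the Fenchel–Young inequality
`s r - conjMaxHalfSq a r ≤ max (s²/2) (a/2)` holds for `r ≥ 0`. Combined with Cauchy–Schwarz it bounds
`⟪t, l⟫ - h_a^*(l)` by `max (‖t‖²/2) (a/2)`, and the bound is attained at `l = t` when `√a ≤ ‖t‖`
and at `l = 0` otherwise.
-/

open scoped RealInnerProductSpace

noncomputable def conjMaxHalfSq (a r : ℝ) : ℝ :=
  if r ≤ Real.sqrt a then Real.sqrt a * r - a / 2 else r ^ 2 / 2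

lemma mul_sub_conjMaxHalfSq_le {a s r : ℝ} (ha : 0 ≤ a) (hr : 0 ≤ r) :
    s * r - conjMaxHalfSq a r ≤ max (s ^ 2 / 2) (a / 2) := by
  have hsqrt : Real.sqrt a ^ 2 = a := Real.sq_sqrt ha
  unfold conjMaxHalfSq
  split_ifs with hrb
  · rcases le_or_gt s (Real.sqrt a) with hsb | hsb
    · refine le_max_of_le_right ?_
      nlinarith [mul_nonneg (sub_nonneg.mpr hsb) hr]
    · refine le_max_of_le_left ?_
      nlinarith [mul_nonneg (sub_nonneg.mpr hsb.le) (sub_nonneg.mpr hrb)]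
  · exact le_max_of_le_left (by nlinarith [sq_nonneg (s - r)])

lemma conjMaxHalfSq_zero (a : ℝ) : conjMaxHalfSq a 0 = -(a / 2) := by
  simp [conjMaxHalfSq]

lemma conjMaxHalfSq_of_sqrt_le {a r : ℝ} (ha : 0 ≤ a) (hr : Real.sqrt a ≤ r) :
    conjMaxHalfSq a r = r ^ 2 / 2 := by
  unfold conjMaxHalfSq
  split_ifs with hrb
  · obtain rfl : r = Real.sqrt a := le_antisymm hrb hr
    linear_combination (1 / 2 : ℝ) * Real.sq_sqrt ha
  · rfl

section InnerProductSpace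

variable {E : Type*} [NormedAddCommGroup E] [InnerProductSpace ℝ E]

lemma inner_sub_conjMaxHalfSq_le {a : ℝ} (ha : 0 ≤ a) (t l : E) :
    ⟪t, l⟫ - conjMaxHalfSq a ‖l‖ ≤ max (‖t‖ ^ 2 / 2) (a / 2) :=
  calc ⟪t, l⟫ - conjMaxHalfSq a ‖l‖ ≤ ‖t‖ * ‖l‖ - conjMaxHalfSq a ‖l‖ := by
        gcongr; exact real_inner_le_norm t l
    _ ≤ max (‖t‖ ^ 2 / 2) (a / 2) := mul_sub_conjMaxHalfSq_le ha (norm_nonneg l)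

lemma exists_inner_sub_conjMaxHalfSq_eq {a : ℝ} (ha : 0 ≤ a) (t : E) :
    ∃ l : E, ⟪t, l⟫ - conjMaxHalfSq a ‖l‖ = max (‖t‖ ^ 2 / 2) (a / 2) := by
  rcases le_or_gt (Real.sqrt a) ‖t‖ with hst | hts
  · have ha_le : a ≤ ‖t‖ ^ 2 := (Real.sqrt_le_left (norm_nonneg t)).mp hst
    refine ⟨t, ?_⟩
    rw [real_inner_self_eq_norm_sq, conjMaxHalfSq_of_sqrt_le ha hst, max_eq_left (by linarith)]
    ring
  · have ht_le : ‖t‖ ^ 2 ≤ a := (Real.lt_sqrt (norm_nonneg t)).mp hts |>.le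
    refine ⟨0, ?_⟩
    rw [inner_zero_right, norm_zero, conjMaxHalfSq_zero, max_eq_right (by linarith)]
    ring

theorem iSup_inner_sub_conjMaxHalfSq {a : ℝ} (ha : 0 ≤ a) (t : E) :
    ⨆ l : E, (⟪t, l⟫ - conjMaxHalfSq a ‖l‖) = max (‖t‖ ^ 2 / 2) (a / 2) := by
  obtain ⟨l₀, hl₀⟩ := exists_inner_sub_conjMaxHalfSq_eq ha t
  exact ciSup_eq_of_forall_le_of_forall_lt_exists_gt (inner_sub_conjMaxHalfSq_le ha t)
    fun w hw => ⟨l₀, hl₀ ▸ hw⟩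

end InnerProductSpace

theorem fenchel_biconjugate_max_quadratic_general
    {E : Type*} [NormedAddCommGroup E] [InnerProductSpace ℝ E]
    (a : ℝ) (ha : 0 < a) (t : E) :
    (⨆ l : E, (⟪t, l⟫ -
        (if ‖l‖ ≤ Real.sqrt a then Real.sqrt a * ‖l‖ - a / 2 else ‖l‖ ^ 2 / 2))) =
      max (‖t‖ ^ 2 / 2) (a / 2) :=
  iSup_inner_sub_conjMaxHalfSq ha.le t

/-- The Fenchel conjugate of `h_a^*` recovers `h_a(t) = max (‖t‖²/2) (a/2)`. -/
theorem fenchel_biconjugate_max_quadratic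
    {E : Type*} [NormedAddCommGroup E] [InnerProductSpace ℝ E]
    [FiniteDimensional ℝ E] (a : ℝ) (ha : 0 < a) (t : E) :
    (⨆ l : E, (⟪t, l⟫ -
        (if ‖l‖ ≤ Real.sqrt a then Real.sqrt a * ‖l‖ - a / 2 else ‖l‖ ^ 2 / 2))) =
      max (‖t‖ ^ 2 / 2) (a / 2) :=
  fenchel_biconjugate_max_quadratic_general a ha t
end

section
/- Let μ > 0, λ > 0, let I be a finite index set, and let g : I → ℝ² be any family of vectors (the values of the discrete gradient). Define H(l; a) = √a·‖l‖ − ‖l‖²/2 if ‖l‖ ≤ √a, and H(l; a) = a/2 if ‖l‖ > √a, for l ∈ ℝ². Then Σ_{i ∈ I} (μ/2)·min(‖g_i‖², λ/μ) = inf over all families l : I → ℝ² of Σ_{i ∈ I} [ (μ/2)·‖g_i − l_i‖² + μ·H(l_i; λ/μ) ]. (This is the equivalence of the isotropic truncated quadratic regularizer with the Geman–Yang half-quadratic form.) -/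
/-!
The penalty is chosen so that `min (‖g‖², a) = min_l (‖g - l‖² + 2 H(l; a))` for each
single vector `g`: the reverse triangle inequality `|‖g‖ - ‖l‖| ≤ ‖g - l‖` reduces the
lower bound to a one-variable inequality in `‖g‖` and `‖l‖`, and the minimum is attained
at `l = 0` when `‖g‖ ≤ √a` and at `l = g` otherwise. Since the variables `l i` are
decoupled, minimizing the sum over families is minimizing each summand.
-/

open Finset

section

variable {E : Type*} [SeminormedAddCommGroup E]

noncomputable def halfQuadraticPenalty (a : ℝ) (l : E) : ℝ :=
  if ‖l‖ ≤ Real.sqrt a then Real.sqrt a * ‖l‖ - ‖l‖ ^ 2 / 2 else a / 2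

theorem min_norm_sq_le_norm_sub_sq_add_halfQuadraticPenalty {a : ℝ} (ha : 0 ≤ a)
    (g l : E) :
    min (‖g‖ ^ 2) a ≤ ‖g - l‖ ^ 2 + 2 * halfQuadraticPenalty a l := by
  have hsq : Real.sqrt a ^ 2 = a := Real.sq_sqrt ha
  have hdist : (‖g‖ - ‖l‖) ^ 2 ≤ ‖g - l‖ ^ 2 := by
    have := abs_norm_sub_norm_le g l
    exact sq_le_sq' (neg_le_of_abs_le this) (le_of_abs_le this)
  unfold halfQuadraticPenalty
  split_ifs with hl
  · rcases le_or_gt ‖g‖ (Real.sqrt a) with hg | hg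
    · have : ‖g‖ ^ 2 ≤ a := hsq ▸ pow_le_pow_left₀ (norm_nonneg g) hg 2
      nlinarith [min_le_left (‖g‖ ^ 2) a, norm_nonneg l]
    · -- `(‖g‖ - ‖l‖)² + 2√a‖l‖ - ‖l‖² - a = (‖g‖ - √a)(‖g‖ + √a - 2‖l‖) ≥ 0`
      nlinarith [min_le_right (‖g‖ ^ 2) a, norm_nonneg l]
  · nlinarith [min_le_right (‖g‖ ^ 2) a, sq_nonneg ‖g - l‖]

theorem exists_norm_sub_sq_add_halfQuadraticPenalty_eq {a : ℝ} (ha : 0 ≤ a) (g : E) :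
    ∃ l : E, ‖g - l‖ ^ 2 + 2 * halfQuadraticPenalty a l = min (‖g‖ ^ 2) a := by
  have hsq : Real.sqrt a ^ 2 = a := Real.sq_sqrt ha
  rcases le_or_gt ‖g‖ (Real.sqrt a) with hg | hg
  · refine ⟨0, ?_⟩
    have : ‖g‖ ^ 2 ≤ a := hsq ▸ pow_le_pow_left₀ (norm_nonneg g) hg 2
    simp [halfQuadraticPenalty, Real.sqrt_nonneg, min_eq_left this]
  · refine ⟨g, ?_⟩
    have : a ≤ ‖g‖ ^ 2 := hsq ▸ pow_le_pow_left₀ (Real.sqrt_nonneg a) hg.le 2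
    rw [sub_self, norm_zero, min_eq_right this, halfQuadraticPenalty, if_neg hg.not_ge]
    ring

theorem isLeast_geman_yang {μ a : ℝ} (hμ : 0 < μ) (ha : 0 ≤ a) (g : E) :
    IsLeast (Set.range fun l : E => μ / 2 * ‖g - l‖ ^ 2 + μ * halfQuadraticPenalty a l)
      (μ / 2 * min (‖g‖ ^ 2) a) := by
  constructor
  · obtain ⟨l, hl⟩ := exists_norm_sub_sq_add_halfQuadraticPenalty_eq ha g
    exact ⟨l, by rw [← hl]; ring⟩
  · rintro _ ⟨l, rfl⟩
    nlinarith [min_norm_sq_le_norm_sub_sq_add_halfQuadraticPenalty ha g l]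

end

theorem isLeast_range_sum {ι α M : Type*} [Fintype ι] [AddCommMonoid M] [PartialOrder M]
    [IsOrderedAddMonoid M] {f : ι → α → M} {m : ι → M}
    (h : ∀ i, IsLeast (Set.range (f i)) (m i)) :
    IsLeast (Set.range fun x : ι → α => ∑ i, f i (x i)) (∑ i, m i) := by
  constructor
  · choose x hx using fun i => (h i).1
    exact ⟨x, sum_congr rfl fun i _ => hx i⟩
  · rintro _ ⟨x, rfl⟩
    exact sum_le_sum fun i _ => (h i).2 ⟨x i, rfl⟩

/-- Equivalence of the isotropic truncated quadratic regularizer with the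
Geman–Yang half-quadratic form. -/
theorem truncated_quadratic_eq_geman_yang
    {I : Type*} [Fintype I] (μ lam : ℝ) (hμ : 0 < μ) (hlam : 0 < lam)
    (g : I → EuclideanSpace ℝ (Fin 2)) :
    (∑ i : I, (μ / 2) * min (‖g i‖ ^ 2) (lam / μ)) =
      ⨅ l : I → EuclideanSpace ℝ (Fin 2),
        ∑ i : I, ((μ / 2) * ‖g i - l i‖ ^ 2 +
          μ * (if ‖l i‖ ≤ Real.sqrt (lam / μ) then
                Real.sqrt (lam / μ) * ‖l i‖ - ‖l i‖ ^ 2 / 2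
              else (lam / μ) / 2)) := by
  have ha : 0 ≤ lam / μ := (div_pos hlam hμ).le
  exact ((isLeast_range_sum fun i => isLeast_geman_yang hμ ha (g i)).isGLB.ciInf_eq).symm
end

section
/- Let E be a finite-dimensional real inner product space, let a > 0, τ > 0, and define h_a^*(l) = √a·‖l‖ − a/2 if ‖l‖ ≤ √a, h_a^*(l) = ‖l‖²/2 if ‖l‖ > √a. For every l̂ ∈ E, the function l ↦ h_a^*(l) + (1/(2τ))·‖l − l̂‖² has a unique global minimizer l⁺, given by: l⁺ = 0 if ‖l̂‖ ≤ τ√a; l⁺ = l̂ − τ√a·l̂/‖l̂‖ if τ√a < ‖l̂‖ < (1+τ)√a; and l⁺ = l̂/(1+τ) if ‖l̂‖ ≥ (1+τ)√a. (This closed form is the auxiliary-variable update of the Geman–Yang model.) -/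
/-!
Since `h_a^*(l) = h ‖l‖` and `‖l - l̂‖² = (‖l‖ - ‖l̂‖)² + 2 (‖l̂‖ ‖l‖ - ⟪l̂, l⟫)`, the objective is
bounded below by `φ ‖l‖`, where `φ r = h r + (r - ‖l̂‖)² / (2τ)`, with equality exactly on the ray
through `l̂` (the equality case of Cauchy–Schwarz). So the minimiser is `(p / ‖l̂‖) • l̂` for the
strict minimiser `p` of `φ` on `[0, ∞)`. In each of the three regimes `(‖l̂‖ - p) / τ` is a
subgradient of the convex function `h` at `p`, which gives `φ p + (r - p)² / (2τ) ≤ φ r`.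
-/

open Real
open scoped InnerProductSpace

/-- `h_a^*(l) = gemanYangConj a ‖l‖`. -/
noncomputable def gemanYangConj (a r : ℝ) : ℝ :=
  if r ≤ √a then √a * r - a / 2 else r ^ 2 / 2

/-- The norm `‖l⁺‖` of the minimiser, as a function of `b = ‖l̂‖`. -/
noncomputable def gemanYangShrink (a τ b : ℝ) : ℝ :=
  if b ≤ τ * √a then 0 else if b < (1 + τ) * √a then b - τ * √a else b / (1 + τ)

section Scalar

variable {a τ b : ℝ}

theorem sqrt_mul_sub_le_gemanYangConj (ha : 0 ≤ a) (r : ℝ) :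
    √a * r - a / 2 ≤ gemanYangConj a r := by
  unfold gemanYangConj
  split_ifs
  · rfl
  · nlinarith [sq_sqrt ha, sq_nonneg (r - √a)]

theorem gemanYangConj_of_sqrt_le (ha : 0 ≤ a) {p : ℝ} (hp : √a ≤ p) :
    gemanYangConj a p = p ^ 2 / 2 := by
  unfold gemanYangConj
  split_ifs with h
  · rw [le_antisymm h hp]
    linarith [sq_sqrt ha]
  · rfl

theorem mul_sub_sq_le_gemanYangConj (ha : 0 ≤ a) {p : ℝ} (hp : √a ≤ p) (r : ℝ) :
    p * r - p ^ 2 / 2 ≤ gemanYangConj a r := by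
  unfold gemanYangConj
  split_ifs with h
  · nlinarith [sq_sqrt ha, mul_nonneg (sub_nonneg.2 hp) (sub_nonneg.2 h)]
  · nlinarith [sq_nonneg (r - p)]

theorem gemanYangShrink_zero (hτ : 0 ≤ τ) : gemanYangShrink a τ 0 = 0 :=
  if_pos (by positivity)

theorem gemanYangShrink_nonneg (hτ : 0 < τ) (hb : 0 ≤ b) : 0 ≤ gemanYangShrink a τ b := by
  unfold gemanYangShrink
  split_ifs <;> first | rfl | linarith | positivity

theorem gemanYangConj_add_mul_le (ha : 0 ≤ a) (hτ : 0 < τ) {r : ℝ} (hr : 0 ≤ r) :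
    gemanYangConj a (gemanYangShrink a τ b) +
        (b - gemanYangShrink a τ b) / τ * (r - gemanYangShrink a τ b) ≤ gemanYangConj a r := by
  have hs := sqrt_nonneg a
  have hτ1 : 0 < 1 + τ := by linarith
  have htangent := sqrt_mul_sub_le_gemanYangConj ha r
  unfold gemanYangShrink
  split_ifs with h₁ h₂
  · have hslope : b / τ ≤ √a := (div_le_iff₀' hτ).2 h₁
    rw [gemanYangConj, if_pos hs, sub_zero, sub_zero, mul_zero]
    linarith [mul_le_mul_of_nonneg_right hslope hr]
  · rw [gemanYangConj, if_pos (by nlinarith)]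
    field_simp
    nlinarith
  · have hp : √a ≤ b / (1 + τ) := (le_div_iff₀' hτ1).2 (not_lt.1 h₂)
    have hslope : (b - b / (1 + τ)) / τ = b / (1 + τ) := by
      field_simp
      ring
    rw [gemanYangConj_of_sqrt_le ha hp, hslope]
    linarith [mul_sub_sq_le_gemanYangConj ha hp r]

theorem add_sq_le_of_subgradient {h : ℝ → ℝ} (hτ : 0 < τ) {p r : ℝ}
    (hsub : h p + (b - p) / τ * (r - p) ≤ h r) :
    h p + 1 / (2 * τ) * (p - b) ^ 2 + 1 / (2 * τ) * (r - p) ^ 2 ≤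
      h r + 1 / (2 * τ) * (r - b) ^ 2 := by
  have hexpand : 1 / (2 * τ) * (r - b) ^ 2 =
      1 / (2 * τ) * (p - b) ^ 2 + 1 / (2 * τ) * (r - p) ^ 2 - (b - p) / τ * (r - p) := by
    field_simp
    ring
  linarith

theorem gemanYangShrink_strictMin (ha : 0 ≤ a) (hτ : 0 < τ) {r : ℝ} (hr : 0 ≤ r)
    (hne : r ≠ gemanYangShrink a τ b) :
    gemanYangConj a (gemanYangShrink a τ b) + 1 / (2 * τ) * (gemanYangShrink a τ b - b) ^ 2 <
      gemanYangConj a r + 1 / (2 * τ) * (r - b) ^ 2 := by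
  have hgrowth := add_sq_le_of_subgradient hτ (gemanYangConj_add_mul_le (b := b) ha hτ hr)
  have hpos : 0 < 1 / (2 * τ) * (r - gemanYangShrink a τ b) ^ 2 :=
    mul_pos (by positivity) (sq_pos_of_ne_zero (sub_ne_zero.2 hne))
  linarith

end Scalar

section Radial

variable {E : Type*} [NormedAddCommGroup E] [InnerProductSpace ℝ E]

theorem norm_div_norm_smul {y : E} (hy : y ≠ 0) {p : ℝ} (hp : 0 ≤ p) : ‖(p / ‖y‖) • y‖ = p := by
  rw [norm_smul, norm_div, norm_norm, Real.norm_of_nonneg hp,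
    div_mul_cancel₀ _ (norm_ne_zero_iff.2 hy)]

theorem radial_prox_unique_min {g : ℝ → ℝ} {c : ℝ} (hc : 0 < c) {lhat : E} {p : ℝ} (hp : 0 ≤ p)
    (hp_zero : lhat = 0 → p = 0)
    (hmin : ∀ r, 0 ≤ r → r ≠ p → g p + c * (p - ‖lhat‖) ^ 2 < g r + c * (r - ‖lhat‖) ^ 2)
    {f : E → ℝ} (hf : ∀ l, f l = g ‖l‖ + c * ‖l - lhat‖ ^ 2) :
    (∀ l, f ((p / ‖lhat‖) • lhat) ≤ f l) ∧ ∀ l, (∀ l', f l ≤ f l') → l = (p / ‖lhat‖) • lhat := by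
  have hdecomp : ∀ l, f l = g ‖l‖ + c * (‖l‖ - ‖lhat‖) ^ 2 +
      2 * c * (‖lhat‖ * ‖l‖ - ⟪lhat, l⟫_ℝ) := by
    intro l
    rw [hf, norm_sub_rev, norm_sub_sq_real]
    ring
  have hgap : ∀ l, 0 ≤ 2 * c * (‖lhat‖ * ‖l‖ - ⟪lhat, l⟫_ℝ) := fun l =>
    mul_nonneg (by positivity) (sub_nonneg.2 (real_inner_le_norm lhat l))
  have hval : f ((p / ‖lhat‖) • lhat) = g p + c * (p - ‖lhat‖) ^ 2 := by
    rcases eq_or_ne lhat 0 with rfl | hne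
    · simp [hf, hp_zero rfl]
    · have hnorm := norm_div_norm_smul hne hp
      have hinner : ⟪lhat, (p / ‖lhat‖) • lhat⟫_ℝ = ‖lhat‖ * ‖(p / ‖lhat‖) • lhat‖ :=
        (inner_eq_norm_mul_iff_div hne).2 (by simp [hnorm])
      rw [hdecomp, hinner, hnorm, sub_self, mul_zero, add_zero]
  have hnorm_eq : ∀ l, f l ≤ g p + c * (p - ‖lhat‖) ^ 2 → ‖l‖ = p := by
    intro l hl
    by_contra hne
    linarith [hmin _ (norm_nonneg l) hne, hdecomp l, hgap l]
  refine ⟨fun l => hval ▸ ?_, fun l hl => ?_⟩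
  · rcases eq_or_ne ‖l‖ p with h | h
    · rw [hdecomp l, ← h]
      linarith [hgap l]
    · linarith [hmin _ (norm_nonneg l) h, hdecomp l, hgap l]
  · have hfl : f l ≤ g p + c * (p - ‖lhat‖) ^ 2 := hval ▸ hl _
    have hnorm := hnorm_eq l hfl
    have hradial : g ‖l‖ + c * (‖l‖ - ‖lhat‖) ^ 2 = g p + c * (p - ‖lhat‖) ^ 2 := by rw [hnorm]
    have hinner : ⟪lhat, l⟫_ℝ = ‖lhat‖ * ‖l‖ := by
      have hgap_nonpos : 2 * c * (‖lhat‖ * ‖l‖ - ⟪lhat, l⟫_ℝ) ≤ 0 := by linarith [hdecomp l]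
      nlinarith [real_inner_le_norm lhat l]
    rcases eq_or_ne lhat 0 with rfl | hne
    · simpa [hp_zero rfl] using hnorm
    · rw [← hnorm]
      simpa using ((inner_eq_norm_mul_iff_div hne).1 hinner).symm

theorem ite_eq_gemanYangShrink_div_norm_smul (a τ : ℝ) (lhat : E) :
    (if ‖lhat‖ ≤ τ * √a then 0
      else if ‖lhat‖ < (1 + τ) * √a then lhat - (τ * √a / ‖lhat‖) • lhat
      else (1 / (1 + τ)) • lhat) = (gemanYangShrink a τ ‖lhat‖ / ‖lhat‖) • lhat := by
  rcases eq_or_ne lhat 0 with rfl | hne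
  · simp
  have hb : ‖lhat‖ ≠ 0 := norm_ne_zero_iff.2 hne
  unfold gemanYangShrink
  split_ifs
  · simp
  · rw [sub_div, div_self hb, sub_smul, one_smul]
  · rw [div_div_cancel_left' hb, one_div]

end Radial

theorem geman_yang_prox_update_general
    {E : Type*} [NormedAddCommGroup E] [InnerProductSpace ℝ E]
    (a τ : ℝ) (ha : 0 < a) (hτ : 0 < τ)
    (lhat : E)
    (f : E → ℝ)
    (hf : ∀ l, f l = (if ‖l‖ ≤ Real.sqrt a then Real.sqrt a * ‖l‖ - a / 2
        else ‖l‖ ^ 2 / 2) + (1 / (2 * τ)) * ‖l - lhat‖ ^ 2)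
    (lplus : E)
    (hlplus : lplus =
      if ‖lhat‖ ≤ τ * Real.sqrt a then 0
      else if ‖lhat‖ < (1 + τ) * Real.sqrt a then
        lhat - (τ * Real.sqrt a / ‖lhat‖) • lhat
      else (1 / (1 + τ)) • lhat) :
    (∀ l, f lplus ≤ f l) ∧ (∀ l, (∀ l', f l ≤ f l') → l = lplus) := by
  rw [hlplus, ite_eq_gemanYangShrink_div_norm_smul]
  exact radial_prox_unique_min (g := gemanYangConj a) (by positivity)
    (gemanYangShrink_nonneg hτ (norm_nonneg lhat))
    (fun h => by rw [h, norm_zero, gemanYangShrink_zero hτ.le])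
    (fun _ hr hne => gemanYangShrink_strictMin ha.le hτ hr hne) hf

/-- Closed form of the proximal map of `h_a^*` (the auxiliary-variable update of
the Geman–Yang model): the unique minimizer of
`l ↦ h_a^*(l) + (1/(2τ))‖l − l̂‖²` is given by soft-thresholding. -/
theorem geman_yang_prox_update
    {E : Type*} [NormedAddCommGroup E] [InnerProductSpace ℝ E]
    [FiniteDimensional ℝ E] (a τ : ℝ) (ha : 0 < a) (hτ : 0 < τ)
    (lhat : E)
    (f : E → ℝ)
    (hf : ∀ l, f l = (if ‖l‖ ≤ Real.sqrt a then Real.sqrt a * ‖l‖ - a / 2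
        else ‖l‖ ^ 2 / 2) + (1 / (2 * τ)) * ‖l - lhat‖ ^ 2)
    (lplus : E)
    (hlplus : lplus =
      if ‖lhat‖ ≤ τ * Real.sqrt a then 0
      else if ‖lhat‖ < (1 + τ) * Real.sqrt a then
        lhat - (τ * Real.sqrt a / ‖lhat‖) • lhat
      else (1 / (1 + τ)) • lhat) :
    (∀ l, f lplus ≤ f l) ∧ (∀ l, (∀ l', f l ≤ f l') → l = lplus) :=
  geman_yang_prox_update_general a τ ha hτ lhat f hf lplus hlplus
end

section
/- Let ξ ≥ 0 and b₀ ∈ (0, 1], and set p = ξ + 1 − b₀ (so p ≥ 0) and Δ = 1/4 + p³/27. Then x = (1/2 + √Δ)^{1/3} − (√Δ − 1/2)^{1/3} satisfies x³ + p·x = 1 and 0 < x ≤ 1. (Hence the Geman–McClure auxiliary-variable proximal update b = x², which solves ξ + 1 − 1/√b + b − b₀ = 0, remains in (0, 1].) -/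
/-!
With `s = √Δ`, the two radicands `1/2 + s` and `s - 1/2` are nonnegative because `p ≥ 0`, and
their product is `s² - 1/4 = (p/3)³`. So the cube roots `u, v` satisfy `u³ - v³ = 1` and
`u v = p/3`, and `(u - v)³ + 3uv(u - v) = u³ - v³` shows that `x = u - v` solves
`x³ + p x = 1`. Monotonicity of `x ↦ x³ + p x` then places this root in `(0, 1]`.
-/

namespace Real

lemma rpow_one_div_three_pow {a : ℝ} (ha : 0 ≤ a) : (a ^ ((1 : ℝ) / 3)) ^ 3 = a := by
  simpa [one_div] using rpow_inv_natCast_pow (n := 3) ha three_ne_zero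

lemma pow_three_rpow_one_div_three {a : ℝ} (ha : 0 ≤ a) : (a ^ 3) ^ ((1 : ℝ) / 3) = a := by
  simpa [one_div] using pow_rpow_inv_natCast (n := 3) ha three_ne_zero

theorem cardano_depressed_cubic {p q : ℝ} (hp : 0 ≤ p) :
    let s := √(q ^ 2 / 4 + p ^ 3 / 27)
    let x := (-q / 2 + s) ^ ((1 : ℝ) / 3) - (q / 2 + s) ^ ((1 : ℝ) / 3)
    x ^ 3 + p * x + q = 0 := by
  intro s x
  have hs2 : s ^ 2 = q ^ 2 / 4 + p ^ 3 / 27 := sq_sqrt (by positivity)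
  have hqs : |q / 2| ≤ s := abs_le_sqrt (by nlinarith [pow_nonneg hp 3])
  have hA : 0 ≤ -q / 2 + s := by linarith [(abs_le.1 hqs).2]
  have hB : 0 ≤ q / 2 + s := by linarith [(abs_le.1 hqs).1]
  set u := (-q / 2 + s) ^ ((1 : ℝ) / 3)
  set v := (q / 2 + s) ^ ((1 : ℝ) / 3)
  have hu3 : u ^ 3 = -q / 2 + s := rpow_one_div_three_pow hA
  have hv3 : v ^ 3 = q / 2 + s := rpow_one_div_three_pow hB
  have huv : u * v = p / 3 := by
    have hprod : (-q / 2 + s) * (q / 2 + s) = (p / 3) ^ 3 := by linear_combination hs2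
    rw [← mul_rpow hA hB, hprod, pow_three_rpow_one_div_three (by positivity)]
  linear_combination hu3 - hv3 + 3 * (v - u) * huv

end Real

lemma pos_and_le_one_of_pow_three_add_mul_eq_one {p x : ℝ} (hp : 0 ≤ p)
    (hx : x ^ 3 + p * x = 1) : 0 < x ∧ x ≤ 1 := by
  constructor
  · by_contra! h
    linarith [Odd.pow_nonpos (by decide : Odd 3) h, mul_nonpos_of_nonneg_of_nonpos hp h]
  · by_contra! h
    nlinarith [one_lt_pow₀ h (n := 3) three_ne_zero, mul_nonneg hp (by linarith : (0 : ℝ) ≤ x)]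

/-- Cardano's formula for the Geman–McClure auxiliary-variable update: the root
`x = (1/2 + √Δ)^{1/3} − (√Δ − 1/2)^{1/3}` of the depressed cubic
`x³ + p·x = 1` satisfies `0 < x ≤ 1`. -/
theorem geman_mcclure_cardano_root
    (ξ b0 : ℝ) (hξ : 0 ≤ ξ) (hb0 : b0 ∈ Set.Ioc (0 : ℝ) 1)
    (p Δ : ℝ) (hp : p = ξ + 1 - b0) (hΔ : Δ = 1 / 4 + p ^ 3 / 27)
    (x : ℝ)
    (hx : x = (1 / 2 + Real.sqrt Δ) ^ ((1 : ℝ) / 3) -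
      (Real.sqrt Δ - 1 / 2) ^ ((1 : ℝ) / 3)) :
    x ^ 3 + p * x = 1 ∧ 0 < x ∧ x ≤ 1 := by
  have hp0 : 0 ≤ p := by linarith [hb0.2]
  have hcubic : x ^ 3 + p * x = 1 := by
    have h := Real.cardano_depressed_cubic (q := -1) hp0
    dsimp only at h
    rw [show (-1 : ℝ) ^ 2 / 4 + p ^ 3 / 27 = Δ by rw [hΔ]; ring,
      show -(-1 : ℝ) / 2 + √Δ = 1 / 2 + √Δ by norm_num,
      show (-1 : ℝ) / 2 + √Δ = √Δ - 1 / 2 by ring, ← hx] at h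
    linarith
  exact ⟨hcubic, pos_and_le_one_of_pow_three_add_mul_eq_one hp0 hcubic⟩
end

section
/- Let μ > 0, ξ ≥ 0, and b₀ ∈ (0, 1], and set a = ξ + 1 − b₀ (so a ≥ 0). Then b⁺ = (−a + √(a² + 4))/2 is the unique positive root of b² + a·b − 1 = 0, it satisfies 0 < b⁺ ≤ 1, and it is the unique minimizer over b > 0 of the function g(b) = (μ/2)·(ξ·b + b − log b − 1) + (μ/4)·(b − b₀)². (This is the auxiliary-variable update of the Hebert–Leahy model, which stays in (0, 1].) -/
/-!
The critical-point equation of `g` is `b² + a b − 1 = 0`, whose only positive root is `b⁺`. For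
any root `c > 0` the quadratic term makes the excess of `g` over its value at `c` explicit:
`g b − g c − (μ/4)(b − c)² = (μ/2)(t − 1 − log t)` with `t = b / c`, which is nonnegative since
`log t ≤ t − 1`. This quadratic growth gives both minimality and uniqueness of the minimizer.
-/

open Real

noncomputable section

namespace HebertLeahy

def posRoot (a : ℝ) : ℝ := (-a + √(a ^ 2 + 4)) / 2

lemma abs_lt_sqrt_sq_add_four (a : ℝ) : |a| < √(a ^ 2 + 4) := by
  rw [lt_sqrt (abs_nonneg a), sq_abs]
  linarith

lemma posRoot_sq_add_mul_sub_one (a : ℝ) : posRoot a ^ 2 + a * posRoot a - 1 = 0 := by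
  have hs := sq_sqrt (show (0 : ℝ) ≤ a ^ 2 + 4 by positivity)
  unfold posRoot
  linear_combination hs / 4

lemma posRoot_pos (a : ℝ) : 0 < posRoot a := by
  have := abs_lt_sqrt_sq_add_four a
  unfold posRoot
  linarith [le_abs_self a]

lemma posRoot_le_one {a : ℝ} (ha : 0 ≤ a) : posRoot a ≤ 1 := by
  nlinarith [posRoot_sq_add_mul_sub_one a, posRoot_pos a]

lemma eq_posRoot_of_sq_add_mul_sub_one {a b : ℝ} (hb : 0 < b)
    (hroot : b ^ 2 + a * b - 1 = 0) : b = posRoot a := by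
  have hfactor : (b - posRoot a) * (b + posRoot a + a) = 0 := by
    linear_combination hroot - posRoot_sq_add_mul_sub_one a
  have hpos : 0 < b + posRoot a + a := by
    have := abs_lt_sqrt_sq_add_four a
    unfold posRoot
    linarith [neg_abs_le a]
  linarith [(mul_eq_zero.1 hfactor).resolve_right hpos.ne']

def proxObjective (μ ξ b0 b : ℝ) : ℝ :=
  (μ / 2) * (ξ * b + b - log b - 1) + (μ / 4) * (b - b0) ^ 2

variable {μ ξ b0 b c : ℝ}

lemma proxObjective_sub_sub_sq (hb : 0 < b) (hc : 0 < c)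
    (hroot : c ^ 2 + (ξ + 1 - b0) * c - 1 = 0) :
    proxObjective μ ξ b0 b - proxObjective μ ξ b0 c - (μ / 4) * (b - c) ^ 2
      = (μ / 2) * (b / c - 1 - log (b / c)) := by
  unfold proxObjective
  rw [log_div hb.ne' hc.ne']
  field_simp
  linear_combination 4 * μ * (b - c) * hroot

lemma proxObjective_add_sq_le (hμ : 0 ≤ μ) (hb : 0 < b) (hc : 0 < c)
    (hroot : c ^ 2 + (ξ + 1 - b0) * c - 1 = 0) :
    proxObjective μ ξ b0 c + (μ / 4) * (b - c) ^ 2 ≤ proxObjective μ ξ b0 b := by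
  have hexcess := proxObjective_sub_sub_sq (μ := μ) hb hc hroot
  have hlog := log_le_sub_one_of_pos (div_pos hb hc)
  nlinarith

lemma proxObjective_le (hμ : 0 ≤ μ) (hb : 0 < b) (hc : 0 < c)
    (hroot : c ^ 2 + (ξ + 1 - b0) * c - 1 = 0) :
    proxObjective μ ξ b0 c ≤ proxObjective μ ξ b0 b := by
  nlinarith [proxObjective_add_sq_le hμ hb hc hroot, sq_nonneg (b - c)]

lemma eq_of_proxObjective_le (hμ : 0 < μ) (hb : 0 < b) (hc : 0 < c)
    (hroot : c ^ 2 + (ξ + 1 - b0) * c - 1 = 0)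
    (hle : proxObjective μ ξ b0 b ≤ proxObjective μ ξ b0 c) : b = c := by
  have hgrowth := proxObjective_add_sq_le hμ.le hb hc hroot
  have hsq : (b - c) ^ 2 = 0 := by nlinarith [sq_nonneg (b - c)]
  exact sub_eq_zero.1 (pow_eq_zero_iff two_ne_zero |>.1 hsq)

end HebertLeahy

end

open HebertLeahy in
/-- The auxiliary-variable update of the Hebert–Leahy model:
`b⁺ = (−a + √(a²+4))/2` is the unique positive root of `b² + a·b − 1 = 0`,
lies in `(0,1]`, and is the unique minimizer over `b > 0` of
`g(b) = (μ/2)(ξb + b − log b − 1) + (μ/4)(b − b₀)²`. -/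
theorem hebert_leahy_prox_update
    (μ ξ b0 : ℝ) (hμ : 0 < μ) (hξ : 0 ≤ ξ) (hb0 : b0 ∈ Set.Ioc (0 : ℝ) 1)
    (a : ℝ) (ha : a = ξ + 1 - b0)
    (g : ℝ → ℝ)
    (hg : ∀ b, g b = (μ / 2) * (ξ * b + b - Real.log b - 1) +
      (μ / 4) * (b - b0) ^ 2)
    (bplus : ℝ) (hbplus : bplus = (-a + Real.sqrt (a ^ 2 + 4)) / 2) :
    (bplus ^ 2 + a * bplus - 1 = 0) ∧
    (∀ b, 0 < b → b ^ 2 + a * b - 1 = 0 → b = bplus) ∧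
    (0 < bplus ∧ bplus ≤ 1) ∧
    (∀ b, 0 < b → g bplus ≤ g b) ∧
    (∀ b, 0 < b → (∀ b', 0 < b' → g b ≤ g b') → b = bplus) := by
  subst ha
  have ha0 : 0 ≤ ξ + 1 - b0 := by linarith [hb0.2]
  obtain rfl : g = proxObjective μ ξ b0 := funext hg
  obtain rfl : bplus = posRoot (ξ + 1 - b0) := hbplus
  have hroot := posRoot_sq_add_mul_sub_one (ξ + 1 - b0)
  have hpos := posRoot_pos (ξ + 1 - b0)
  refine ⟨hroot, fun b hb ↦ eq_posRoot_of_sq_add_mul_sub_one hb,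
    ⟨hpos, posRoot_le_one ha0⟩, fun b hb ↦ proxObjective_le hμ.le hb hpos hroot,
    fun b hb hmin ↦ eq_of_proxObjective_le hμ hb hpos hroot (hmin _ hpos)⟩
end
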